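/- Let G be a finite group and for each g ∈ G let α_g : G × G → ℂˣ satisfy the identity α_g(hk,l)·α_{lgl⁻¹}(h,k) = α_g(h,kl)·α_g(k,l). Then the multiplication (a ⊗ e(x))·(b ⊗ e(y)) = α_y(a,b) · (ab ⊗ e(b⁻¹xb)e(y)) on ℂ[G] ⊗ ℂ[G]* is associative. -/

import Mathlib

/-! Both triple products, evaluated at `p ⊗ e(x)`, are sums over `a, b` (with `c = (ab)⁻¹p`) of the
same coefficient, weighted by `α_x(ab, c) α_{cxc⁻¹}(a, b)` on one side and `α_x(a, bc) α_x(b, c)`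
on the other; these weights agree by the twisted cocycle identity. -/

open scoped Classical in
/-- The multiplication of the twisted quantum double `D_α(G)`, on the underlying space
`ℂ[G] ⊗ ℂ[G]*` realized as functions `G × G → ℂ` (basis element `a ⊗ e(x)` is the delta
function at `(a,x)`): on basis elements,
`(a ⊗ e(x))·(b ⊗ e(y)) = α_y(a,b) (ab ⊗ e(b⁻¹xb)e(y))`, extended bilinearly. -/
noncomputable def doubleMul {G : Type} [Group G] [Fintype G]
    (w : G → G → G → ℂˣ)  -- `w y a b = α_y(a,b)`
    (f₁ f₂ : G × G → ℂ) : G × G → ℂ :=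
  fun q => ∑ u : G, ∑ v : G,
    if u * v = q.1 then
      f₁ (u, v * q.2 * v⁻¹) * f₂ (v, q.2) * (w q.2 u v : ℂ)
    else 0

section

variable {G : Type} [Group G] [Fintype G] (w : G → G → G → ℂˣ)

theorem doubleMul_apply (f g : G × G → ℂ) (p x : G) :
    doubleMul w f g (p, x) =
      ∑ u : G, f (u, (u⁻¹ * p) * x * (u⁻¹ * p)⁻¹) * g (u⁻¹ * p, x) * w x u (u⁻¹ * p) := by
  classical
  refine Finset.sum_congr rfl fun u _ => ?_
  simp only [← eq_inv_mul_iff_mul_eq, Finset.sum_ite_eq', Finset.mem_univ, if_true]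

/-- The coefficient of `a ⊗ e(·)`, `b ⊗ e(·)`, `c ⊗ e(x)` in `f₁`, `f₂`, `f₃` that contributes
to `abc ⊗ e(x)` in a product of the three. -/
def tripleCoeff (f₁ f₂ f₃ : G × G → ℂ) (a b c x : G) : ℂ :=
  f₁ (a, b * (c * x * c⁻¹) * b⁻¹) * f₂ (b, c * x * c⁻¹) * f₃ (c, x)

theorem doubleMul_doubleMul_apply_left (f₁ f₂ f₃ : G × G → ℂ) (p x : G) :
    doubleMul w (doubleMul w f₁ f₂) f₃ (p, x) =
      ∑ a : G, ∑ b : G, tripleCoeff f₁ f₂ f₃ a b ((a * b)⁻¹ * p) x *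
        ((w x (a * b) ((a * b)⁻¹ * p) *
          w (((a * b)⁻¹ * p) * x * ((a * b)⁻¹ * p)⁻¹) a b : ℂˣ) : ℂ) := by
  simp only [doubleMul_apply, Finset.sum_mul]
  rw [Finset.sum_comm]
  refine Finset.sum_congr rfl fun a _ => ?_
  rw [← Equiv.sum_comp (Equiv.mulLeft a)]
  refine Finset.sum_congr rfl fun b _ => ?_
  simp only [Equiv.coe_mulLeft, inv_mul_cancel_left, tripleCoeff, Units.val_mul]
  ring

theorem doubleMul_doubleMul_apply_right (f₁ f₂ f₃ : G × G → ℂ) (p x : G) :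
    doubleMul w f₁ (doubleMul w f₂ f₃) (p, x) =
      ∑ a : G, ∑ b : G, tripleCoeff f₁ f₂ f₃ a b ((a * b)⁻¹ * p) x *
        ((w x a (b * ((a * b)⁻¹ * p)) * w x b ((a * b)⁻¹ * p) : ℂˣ) : ℂ) := by
  simp only [doubleMul_apply, Finset.mul_sum, Finset.sum_mul]
  refine Finset.sum_congr rfl fun a _ => Finset.sum_congr rfl fun b _ => ?_
  have hc : (a * b)⁻¹ * p = b⁻¹ * (a⁻¹ * p) := by rw [mul_inv_rev, mul_assoc]
  simp only [tripleCoeff, hc, mul_inv_cancel_left, Units.val_mul]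
  have hconj : b * (b⁻¹ * (a⁻¹ * p) * x * (b⁻¹ * (a⁻¹ * p))⁻¹) * b⁻¹ =
      a⁻¹ * p * x * (a⁻¹ * p)⁻¹ := by group
  rw [hconj]
  ring

end

/-- If the family `α_g : G × G → ℂˣ` satisfies
`α_g(hk,l)·α_{lgl⁻¹}(h,k) = α_g(h,kl)·α_g(k,l)`, then the multiplication
`(a ⊗ e(x))·(b ⊗ e(y)) = α_y(a,b)(ab ⊗ e(b⁻¹xb)e(y))` on `ℂ[G] ⊗ ℂ[G]*` is
associative. -/
theorem doubleMul_assoc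
    (G : Type) [Group G] [Fintype G]
    (w : G → G → G → ℂˣ)
    (hid : ∀ g h k l : G,
      w g (h * k) l * w (l * g * l⁻¹) h k = w g h (k * l) * w g k l) :
    ∀ f₁ f₂ f₃ : G × G → ℂ,
      doubleMul w (doubleMul w f₁ f₂) f₃ = doubleMul w f₁ (doubleMul w f₂ f₃) := by
  intro f₁ f₂ f₃
  funext ⟨p, x⟩
  rw [doubleMul_doubleMul_apply_left, doubleMul_doubleMul_apply_right]
  simp only [hid]
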